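/- arXiv:2309.12213 — 3 statements merged into one kernel-verified Lean document; each statement's English description precedes it below -/
import Mathlib

section
/- Let G be a finitely generated group and H ≤ G a subgroup of finite index with r₀(G_ab) = r₀(H_ab). Then every homomorphism χ : H → ℝ admits an extension χ' : G → ℝ with χ'|_H = χ, and χ' is nonzero if and only if χ is nonzero. -/
open scoped TensorProduct

/-- The torsion-free rank of the abelianization of a group. -/
noncomputable def torsionFreeRank (G : Type*) [Group G] : ℕ :=
  Module.finrank ℚ (ℚ ⊗[ℤ] Additive (Abelianization G))

/-- Let `G` be a finitely generated group and `H ≤ G` a finite-index subgroup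
with `r₀(G_ab) = r₀(H_ab)`. Then every character `χ : H → ℝ` extends to a
character `χ' : G → ℝ` with `χ'|_H = χ`, and `χ'` is nonzero iff `χ` is. -/
theorem character_extends_of_finiteIndex_rank_eq (G : Type*) [Group G] [Group.FG G]
    (H : Subgroup G) [H.FiniteIndex]
    (hrank : torsionFreeRank G = torsionFreeRank H)
    (χ : H →* Multiplicative ℝ) :
    ∃ χ' : G →* Multiplicative ℝ, χ'.comp H.subtype = χ ∧ (χ' ≠ 1 ↔ χ ≠ 1) := by
  classical
  haveI : Group.FG ↥H := H.fg_of_index_ne_zero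
  haveI hGab : Group.FG (Abelianization G) :=
    Group.fg_of_surjective (f := Abelianization.of)
      (fun x => QuotientGroup.induction_on x fun g => ⟨g, rfl⟩)
  haveI hHab : Group.FG (Abelianization ↥H) :=
    Group.fg_of_surjective (f := Abelianization.of)
      (fun x => QuotientGroup.induction_on x fun g => ⟨g, rfl⟩)
  haveI : Module.Finite ℤ (Additive (Abelianization G)) :=
    Module.Finite.iff_addGroup_fg.mpr inferInstance
  haveI : Module.Finite ℤ (Additive (Abelianization ↥H)) :=
    Module.Finite.iff_addGroup_fg.mpr inferInstance
  -- the induced map on abelianizations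
  set ι : Additive (Abelianization ↥H) →+ Additive (Abelianization G) :=
    MonoidHom.toAdditive (Abelianization.map H.subtype) with hι
  set f : ℚ ⊗[ℤ] Additive (Abelianization ↥H) →ₗ[ℚ] ℚ ⊗[ℤ] Additive (Abelianization G) :=
    ι.toIntLinearMap.baseChange ℚ with hf
  have hsurj : Function.Surjective f := by
    intro z
    induction z using TensorProduct.induction_on with
    | zero => exact ⟨0, map_zero _⟩
    | tmul q x =>
      obtain ⟨g, rfl⟩ : ∃ g : G, Additive.ofMul (Abelianization.of g) = x := by
        obtain ⟨g, hg⟩ : ∃ g, Abelianization.of g = Additive.toMul x :=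
          QuotientGroup.induction_on (Additive.toMul x) fun g => ⟨g, rfl⟩
        exact ⟨g, by rw [hg]; rfl⟩
      obtain ⟨n, hn0, -, hnH⟩ :=
        Subgroup.exists_pow_mem_of_index_ne_zero (Subgroup.FiniteIndex.index_ne_zero (H := H)) g
      refine ⟨((n : ℚ)⁻¹ * q) ⊗ₜ Additive.ofMul (Abelianization.of (⟨g ^ n, hnH⟩ : H)), ?_⟩
      have hι' : ι (Additive.ofMul (Abelianization.of (⟨g ^ n, hnH⟩ : H)))
          = n • Additive.ofMul (Abelianization.of g) := by
        show Additive.ofMul (Abelianization.map H.subtype (Abelianization.of (⟨g ^ n, hnH⟩ : H)))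
            = n • Additive.ofMul (Abelianization.of g)
        rw [Abelianization.map_of]
        show Additive.ofMul (Abelianization.of (g ^ n)) = _
        rw [map_pow, ← ofMul_pow]
        try rfl
      have : ι.toIntLinearMap (Additive.ofMul (Abelianization.of (⟨g ^ n, hnH⟩ : H)))
          = n • Additive.ofMul (Abelianization.of g) := hι'
      rw [hf, LinearMap.baseChange_tmul, this, TensorProduct.tmul_smul,
        TensorProduct.smul_tmul', nsmul_eq_mul]
      congr 1
      have hn : (n : ℚ) ≠ 0 := Nat.cast_ne_zero.mpr hn0.ne'
      field_simp
    | add x y hx hy =>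
      obtain ⟨u, hu⟩ := hx
      obtain ⟨v, hv⟩ := hy
      exact ⟨u + v, by rw [map_add, hu, hv]⟩
  have hd : Module.finrank ℚ (ℚ ⊗[ℤ] Additive (Abelianization ↥H))
      = Module.finrank ℚ (ℚ ⊗[ℤ] Additive (Abelianization G)) := hrank.symm
  have hinj : Function.Injective f :=
    (LinearMap.injective_iff_surjective_of_finrank_eq_finrank hd).mpr hsurj
  set e := LinearEquiv.ofBijective f ⟨hinj, hsurj⟩ with he
  -- the character as an additive map
  set χl : Abelianization ↥H →* Multiplicative ℝ := Abelianization.lift χ with hχl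
  set a : Additive (Abelianization ↥H) →+ ℝ :=
    AddMonoidHom.mk' (fun x => Multiplicative.toAdd (χl (Additive.toMul x)))
      (by intro x y; simp [toMul_add]) with ha
  set χt : ℚ ⊗[ℤ] Additive (Abelianization ↥H) →ₗ[ℚ] ℝ :=
    LinearMap.liftBaseChange ℚ a.toIntLinearMap with hχt
  set F : ℚ ⊗[ℤ] Additive (Abelianization G) →ₗ[ℤ] ℝ :=
    (χt ∘ₗ e.symm.toLinearMap).restrictScalars ℤ with hF
  set ψ : Additive (Abelianization G) →+ ℝ :=
    (F ∘ₗ (TensorProduct.mk ℤ ℚ (Additive (Abelianization G)) 1)).toAddMonoidHom with hψ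
  set χab : Abelianization G →* Multiplicative ℝ :=
    MonoidHom.mk' (fun x => Multiplicative.ofAdd (ψ (Additive.ofMul x)))
      (by
        intro x y
        show Multiplicative.ofAdd (ψ (Additive.ofMul (x * y)))
          = Multiplicative.ofAdd (ψ (Additive.ofMul x)) * Multiplicative.ofAdd (ψ (Additive.ofMul y))
        rw [ofMul_mul, map_add, ofAdd_add]) with hχab
  have hext : (χab.comp Abelianization.of).comp H.subtype = χ := by
    ext h
    show Multiplicative.ofAdd (ψ (Additive.ofMul (Abelianization.of ((h : G))))) = χ h
    have key : e ((1 : ℚ) ⊗ₜ Additive.ofMul (Abelianization.of h))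
        = (1 : ℚ) ⊗ₜ Additive.ofMul (Abelianization.of ((h : G))) := by
      show f _ = _
      rw [hf, LinearMap.baseChange_tmul]
      rfl
    have key2 : e.symm ((1 : ℚ) ⊗ₜ Additive.ofMul (Abelianization.of ((h : G))))
        = (1 : ℚ) ⊗ₜ Additive.ofMul (Abelianization.of h) := by
      rw [← key, LinearEquiv.symm_apply_apply]
    show Multiplicative.ofAdd (χt (e.symm ((1:ℚ) ⊗ₜ _))) = χ h
    rw [key2, hχt, LinearMap.liftBaseChange_tmul, one_smul]
    show Multiplicative.ofAdd (Multiplicative.toAdd (χl (Abelianization.of h))) = χ h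
    rw [hχl, Abelianization.lift_apply_of]
    try rfl
  refine ⟨χab.comp Abelianization.of, hext, ?_⟩
  constructor
  · intro hχ' hχ1
    apply hχ'
    ext g
    show Multiplicative.ofAdd (ψ (Additive.ofMul (Abelianization.of g))) = 1
    have hl : χl = 1 := by
      rw [hχl, hχ1]
      ext x
      simp
    have haz : a = 0 := by
      refine AddMonoidHom.ext fun x => ?_
      show Multiplicative.toAdd (χl (Additive.toMul x)) = 0
      rw [hl]
      rfl
    have hχtz : χt = 0 := by
      rw [hχt, haz]
      ext x
      simp
    show Multiplicative.ofAdd (χt (e.symm _)) = 1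
    rw [hχtz]
    rfl
  · intro hχ1 hχ'
    exact hχ1 (by rw [← hext, hχ']; rfl)
end

section
/- The homomorphisms λ, ρ : F_τ → ℝ given by the τ-logarithms of the slopes at 0 and 1 respectively are linearly independent in Hom(F_τ, ℝ): there exist f, g ∈ F_τ with λ(f) = 1, ρ(f) = 0, λ(g) = 0, ρ(g) = 1. -/
/-- The small Golden Ratio `τ = (√5 - 1)/2`, the positive root of `x² + x = 1`. -/
noncomputable def goldenTau : ℝ := (Real.sqrt 5 - 1) / 2

/-- `f` is an element of Cleary's group `F_τ`. -/
noncomputable def IsFtau (f : Equiv.Perm (Set.Icc (0:ℝ) 1)) : Prop :=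
  Continuous f ∧ Continuous f.symm ∧ StrictMono (fun x => f x) ∧
  ∃ (m : ℕ) (a : Fin (m + 1) → ℝ) (c : Fin m → ℝ) (k : Fin m → ℤ),
    StrictMono a ∧ a 0 = 0 ∧ a (Fin.last m) = 1 ∧
    (∀ j, a j ∈ Subring.closure ({goldenTau} : Set ℝ)) ∧
    ∀ (j : Fin m) (x : Set.Icc (0:ℝ) 1),
      a j.castSucc ≤ (x : ℝ) → (x : ℝ) ≤ a j.succ →
      (f x : ℝ) = c j + goldenTau ^ (k j) * (x : ℝ)

namespace GoldenAux

local notation "t" => goldenTau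

lemma sqrt5_sq : Real.sqrt 5 ^ 2 = 5 := Real.sq_sqrt (by norm_num)

lemma t_sq : t ^ 2 = 1 - t := by
  unfold goldenTau
  have h := sqrt5_sq
  nlinarith [h]

lemma t_pos : 0 < t := by
  unfold goldenTau
  nlinarith [sqrt5_sq, Real.sqrt_nonneg 5]

lemma t_lt_one : t < 1 := by
  unfold goldenTau
  nlinarith [sqrt5_sq, Real.sqrt_nonneg 5]

lemma t_sq_lt_t : t ^ 2 < t := by nlinarith [t_pos, t_lt_one]

lemma t_sq_pos : 0 < t ^ 2 := pow_pos t_pos 2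

lemma t_lt_onen : t < 1 := t_lt_one

lemma t_inv : t⁻¹ = t + 1 := by
  have h : t * (t + 1) = 1 := by nlinarith [t_sq]
  exact inv_eq_of_mul_eq_one_right h

/-- The first witness map on ℝ. -/
noncomputable def F (x : ℝ) : ℝ :=
  if x ≤ t ^ 2 then t * x else if x ≤ t then (t + 1) * x - t ^ 2 else x

/-- The second witness map on ℝ. -/
noncomputable def G (x : ℝ) : ℝ :=
  if x ≤ t ^ 2 then x else if x ≤ t then (t + 1) * x - t ^ 3 else t * x + t ^ 2

lemma F_left {x : ℝ} (hx : x ≤ t ^ 2) : F x = t * x := by simp [F, hx]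

lemma F_mid {x : ℝ} (h1 : t ^ 2 ≤ x) (h2 : x ≤ t) : F x = (t + 1) * x - t ^ 2 := by
  rcases le_or_gt x (t ^ 2) with h | h
  · have hx : x = t ^ 2 := le_antisymm h h1
    subst hx
    simp only [F, le_refl, if_pos]
    nlinarith [t_sq]
  · simp [F, not_le.2 h, h2]

lemma F_right {x : ℝ} (h1 : t ≤ x) : F x = x := by
  rcases le_or_gt x (t ^ 2) with h | h
  · exact absurd (h1.trans h) (not_le.2 t_sq_lt_t)
  rcases le_or_gt x t with h' | h'
  · have hx : x = t := le_antisymm h' h1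
    subst hx
    rw [F, if_neg (not_le.2 t_sq_lt_t), if_pos le_rfl]
    nlinarith [t_sq]
  · simp [F, not_le.2 h, not_le.2 h']

lemma G_left {x : ℝ} (hx : x ≤ t ^ 2) : G x = x := by simp [G, hx]

lemma G_mid {x : ℝ} (h1 : t ^ 2 ≤ x) (h2 : x ≤ t) : G x = (t + 1) * x - t ^ 3 := by
  rcases le_or_gt x (t ^ 2) with h | h
  · have hx : x = t ^ 2 := le_antisymm h h1
    subst hx
    simp only [G, le_refl, if_pos]
    ring
  · simp [G, not_le.2 h, h2]

lemma G_right {x : ℝ} (h1 : t ≤ x) : G x = t * x + t ^ 2 := by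
  rcases le_or_gt x (t ^ 2) with h | h
  · exact absurd (h1.trans h) (not_le.2 t_sq_lt_t)
  rcases le_or_gt x t with h' | h'
  · have hx : x = t := le_antisymm h' h1
    subst hx
    rw [G, if_neg (not_le.2 t_sq_lt_t), if_pos le_rfl]
    nlinarith [t_sq]
  · simp [G, not_le.2 h, not_le.2 h']

lemma F_cont : Continuous F := by
  unfold F
  apply Continuous.if_le
  · exact continuous_const.mul continuous_id
  · apply Continuous.if_le
    · exact (continuous_const.mul continuous_id).sub continuous_const
    · exact continuous_id
    · exact continuous_id
    · exact continuous_const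
    · intro x hx
      subst hx
      nlinarith [t_sq]
  · exact continuous_id
  · exact continuous_const
  · intro x hx
    subst hx
    have h2 : t ^ 2 ≤ t := t_sq_lt_t.le
    rw [if_pos h2]
    nlinarith [t_sq]

lemma G_cont : Continuous G := by
  unfold G
  apply Continuous.if_le
  · exact continuous_id
  · apply Continuous.if_le
    · exact (continuous_const.mul continuous_id).sub continuous_const
    · exact (continuous_const.mul continuous_id).add continuous_const
    · exact continuous_id
    · exact continuous_const
    · intro x hx
      subst hx
      nlinarith [t_sq]
  · exact continuous_id
  · exact continuous_const
  · intro x hx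
    subst hx
    have h2 : t ^ 2 ≤ t := t_sq_lt_t.le
    rw [if_pos h2]
    nlinarith [t_sq]

lemma F_mono : StrictMono F := by
  have h1 : StrictMonoOn F (Set.Iic t) := by
    have e : Set.Iic (t ^ 2) ∪ Set.Icc (t ^ 2) t = Set.Iic t :=
      Set.Iic_union_Icc_eq_Iic t_sq_lt_t.le
    rw [← e]
    apply StrictMonoOn.union _ _ isGreatest_Iic ⟨Set.left_mem_Icc.2 t_sq_lt_t.le, fun y hy => hy.1⟩
    · intro x hx y hy hxy
      rw [F_left hx, F_left hy]
      exact (mul_lt_mul_iff_right₀ t_pos).2 hxy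
    · intro x hx y hy hxy
      rw [F_mid hx.1 hx.2, F_mid hy.1 hy.2]
      nlinarith [t_pos]
  have h2 : StrictMonoOn F (Set.Ici t) := by
    intro x hx y hy hxy
    rw [F_right hx, F_right hy]
    exact hxy
  exact StrictMonoOn.Iic_union_Ici h1 h2

lemma G_mono : StrictMono G := by
  have h1 : StrictMonoOn G (Set.Iic t) := by
    have e : Set.Iic (t ^ 2) ∪ Set.Icc (t ^ 2) t = Set.Iic t :=
      Set.Iic_union_Icc_eq_Iic t_sq_lt_t.le
    rw [← e]
    apply StrictMonoOn.union _ _ isGreatest_Iic ⟨Set.left_mem_Icc.2 t_sq_lt_t.le, fun y hy => hy.1⟩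
    · intro x hx y hy hxy
      rw [G_left hx, G_left hy]
      exact hxy
    · intro x hx y hy hxy
      rw [G_mid hx.1 hx.2, G_mid hy.1 hy.2]
      nlinarith [t_pos]
  have h2 : StrictMonoOn G (Set.Ici t) := by
    intro x hx y hy hxy
    rw [G_right hx, G_right hy]
    nlinarith [t_pos]
  exact StrictMonoOn.Iic_union_Ici h1 h2

lemma F_zero : F 0 = 0 := by rw [F_left t_sq_pos.le]; ring
lemma F_one : F 1 = 1 := F_right t_lt_one.le
lemma G_zero : G 0 = 0 := G_left t_sq_pos.le
lemma G_one : G 1 = 1 := by rw [G_right t_lt_one.le]; nlinarith [t_sq]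

lemma mem_Icc' (H : ℝ → ℝ) (hm : StrictMono H) (h0 : H 0 = 0) (h1 : H 1 = 1)
    {x : ℝ} (hx : x ∈ Set.Icc (0:ℝ) 1) : H x ∈ Set.Icc (0:ℝ) 1 := by
  constructor
  · rw [← h0]; exact hm.monotone hx.1
  · rw [← h1]; exact hm.monotone hx.2

/-- Build the permutation of `[0,1]` from a suitable map on ℝ. -/
noncomputable def perm (H : ℝ → ℝ) (hc : Continuous H) (hm : StrictMono H)
    (h0 : H 0 = 0) (h1 : H 1 = 1) : Equiv.Perm (Set.Icc (0:ℝ) 1) :=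
  Equiv.ofBijective (fun x => ⟨H x, mem_Icc' H hm h0 h1 x.2⟩)
    ⟨fun a b hab => Subtype.ext (hm.injective (congrArg Subtype.val hab)),
     by
      rintro ⟨y, hy⟩
      have : y ∈ Set.Icc (H 0) (H 1) := by rw [h0, h1]; exact hy
      obtain ⟨x, hx, hHx⟩ := intermediate_value_Icc (by norm_num) hc.continuousOn this
      exact ⟨⟨x, hx⟩, Subtype.ext hHx⟩⟩

lemma perm_apply (H : ℝ → ℝ) (hc : Continuous H) (hm : StrictMono H)
    (h0 : H 0 = 0) (h1 : H 1 = 1) (x : Set.Icc (0:ℝ) 1) :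
    (perm H hc hm h0 h1 x : ℝ) = H x := rfl

lemma perm_continuous (H : ℝ → ℝ) (hc : Continuous H) (hm : StrictMono H)
    (h0 : H 0 = 0) (h1 : H 1 = 1) : Continuous (perm H hc hm h0 h1) :=
  Continuous.subtype_mk (hc.comp continuous_subtype_val) _

lemma perm_symm_continuous (H : ℝ → ℝ) (hc : Continuous H) (hm : StrictMono H)
    (h0 : H 0 = 0) (h1 : H 1 = 1) : Continuous (perm H hc hm h0 h1).symm :=
  (perm_continuous H hc hm h0 h1).continuous_symm_of_equiv_compact_to_t2

lemma perm_strictMono (H : ℝ → ℝ) (hc : Continuous H) (hm : StrictMono H)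
    (h0 : H 0 = 0) (h1 : H 1 = 1) : StrictMono (fun x => perm H hc hm h0 h1 x) := by
  intro a b hab
  exact Subtype.mk_lt_mk.2 (hm (Subtype.coe_lt_coe.2 hab))

lemma mem_closure_t (n : ℕ) : t ^ n ∈ Subring.closure ({t} : Set ℝ) :=
  pow_mem (Subring.subset_closure (Set.mem_singleton _)) n

end GoldenAux

open GoldenAux in
/-- The characters `λ, ρ : F_τ → ℝ` given by the `τ`-logarithms of the slopes
at `0` and `1` are linearly independent: there are `f, g ∈ F_τ` with
`λ(f) = 1, ρ(f) = 0, λ(g) = 0, ρ(g) = 1`, i.e. `f` has slope `τ` at `0` and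
slope `1` at `1`, while `g` has slope `1` at `0` and slope `τ` at `1`. -/
theorem lambda_rho_linearly_independent :
    ∃ f g : Equiv.Perm (Set.Icc (0:ℝ) 1), IsFtau f ∧ IsFtau g ∧
      (∃ ε > 0, ∀ x : Set.Icc (0:ℝ) 1, (x : ℝ) ≤ ε →
        (f x : ℝ) = goldenTau * (x : ℝ)) ∧
      (∃ ε > 0, ∀ x : Set.Icc (0:ℝ) 1, 1 - ε ≤ (x : ℝ) →
        (f x : ℝ) = (x : ℝ)) ∧
      (∃ ε > 0, ∀ x : Set.Icc (0:ℝ) 1, (x : ℝ) ≤ ε →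
        (g x : ℝ) = (x : ℝ)) ∧
      (∃ ε > 0, ∀ x : Set.Icc (0:ℝ) 1, 1 - ε ≤ (x : ℝ) →
        (g x : ℝ) = 1 - goldenTau * (1 - (x : ℝ))) := by
  have ht2 := t_sq
  have htpos := t_pos
  have ht1 := t_lt_one
  have htsq := t_sq_lt_t
  refine ⟨perm F F_cont F_mono F_zero F_one, perm G G_cont G_mono G_zero G_one, ?_, ?_, ?_, ?_, ?_, ?_⟩
  · refine ⟨perm_continuous _ _ _ _ _, perm_symm_continuous _ _ _ _ _,
      perm_strictMono _ _ _ _ _, 3,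
      ![0, goldenTau ^ 2, goldenTau, 1], ![0, -goldenTau ^ 2, 0], ![1, -1, 0], ?_, rfl, rfl, ?_, ?_⟩
    · rw [Fin.strictMono_iff_lt_succ]
      intro i
      fin_cases i <;> simp [Fin.succ, Fin.castSucc, Fin.castAdd, Fin.castLE] <;> first | exact t_sq_pos | exact htsq | exact ht1
    · intro j
      fin_cases j <;> simp [Fin.succ, Fin.castSucc, Fin.castAdd, Fin.castLE]
      · exact mem_closure_t 2
      · exact Subring.subset_closure (Set.mem_singleton _)
    · intro j x hx1 hx2
      rw [perm_apply _ _ _ _ _]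
      fin_cases j
      · have h2 : (x : ℝ) ≤ goldenTau ^ 2 := hx2
        show F (x : ℝ) = 0 + goldenTau ^ (1:ℤ) * (x : ℝ)
        rw [F_left h2, zpow_one]; ring
      · have h1' : goldenTau ^ 2 ≤ (x : ℝ) := hx1
        have h2 : (x : ℝ) ≤ goldenTau := hx2
        show F (x : ℝ) = -goldenTau ^ 2 + goldenTau ^ (-1:ℤ) * (x : ℝ)
        rw [F_mid h1' h2, zpow_neg_one, t_inv]; ring
      · have h1' : goldenTau ≤ (x : ℝ) := hx1
        show F (x : ℝ) = 0 + goldenTau ^ (0:ℤ) * (x : ℝ)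
        rw [F_right h1', zpow_zero]; ring
  · refine ⟨perm_continuous _ _ _ _ _, perm_symm_continuous _ _ _ _ _,
      perm_strictMono _ _ _ _ _, 3,
      ![0, goldenTau ^ 2, goldenTau, 1], ![0, -goldenTau ^ 3, goldenTau ^ 2], ![0, -1, 1], ?_, rfl, rfl, ?_, ?_⟩
    · rw [Fin.strictMono_iff_lt_succ]
      intro i
      fin_cases i <;> simp [Fin.succ, Fin.castSucc, Fin.castAdd, Fin.castLE] <;> first | exact t_sq_pos | exact htsq | exact ht1
    · intro j
      fin_cases j <;> simp [Fin.succ, Fin.castSucc, Fin.castAdd, Fin.castLE]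
      · exact mem_closure_t 2
      · exact Subring.subset_closure (Set.mem_singleton _)
    · intro j x hx1 hx2
      rw [perm_apply _ _ _ _ _]
      fin_cases j
      · have h2 : (x : ℝ) ≤ goldenTau ^ 2 := hx2
        show G (x : ℝ) = 0 + goldenTau ^ (0:ℤ) * (x : ℝ)
        rw [G_left h2, zpow_zero]; ring
      · have h1' : goldenTau ^ 2 ≤ (x : ℝ) := hx1
        have h2 : (x : ℝ) ≤ goldenTau := hx2
        show G (x : ℝ) = -goldenTau ^ 3 + goldenTau ^ (-1:ℤ) * (x : ℝ)
        rw [G_mid h1' h2, zpow_neg_one, t_inv]; ring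
      · have h1' : goldenTau ≤ (x : ℝ) := hx1
        show G (x : ℝ) = goldenTau ^ 2 + goldenTau ^ (1:ℤ) * (x : ℝ)
        rw [G_right h1', zpow_one]; ring
  · exact ⟨goldenTau ^ 2, t_sq_pos, fun x hx => by rw [perm_apply, F_left hx]⟩
  · refine ⟨goldenTau ^ 2, t_sq_pos, fun x hx => ?_⟩
    have : goldenTau ≤ (x : ℝ) := by linarith [ht2]
    rw [perm_apply, F_right this]
  · exact ⟨goldenTau ^ 2, t_sq_pos, fun x hx => by rw [perm_apply, G_left hx]⟩
  · refine ⟨goldenTau ^ 2, t_sq_pos, fun x hx => ?_⟩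
    have : goldenTau ≤ (x : ℝ) := by linarith [ht2]
    rw [perm_apply, G_right this]
    linarith [ht2]
end

section
/- Let K be the subgroup of F_τ generated by {x₀, x₁, y₁, x₂, y₂, …} (all standard generators except y₀). Then K has index 2 in F_τ, with coset decomposition F_τ = K ⊔ y₀K. -/
/-- The defining relations of `F_τ` (generators `xᵢ = (false, i)`,
`yᵢ = (true, i)`). -/
def ftauRels : Set (FreeGroup (Bool × ℕ)) :=
  {r | ∃ (a b : Bool) (i j : ℕ), i < j ∧
      r = FreeGroup.of (a, j) * FreeGroup.of (b, i) *
        (FreeGroup.of (b, i) * FreeGroup.of (a, j + 1))⁻¹} ∪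
  {r | ∃ i : ℕ, r = FreeGroup.of (true, i) ^ 2 *
      (FreeGroup.of (false, i) * FreeGroup.of (false, i + 1))⁻¹}

namespace FtauAux

abbrev F := PresentedGroup ftauRels

/-- the generating set of `K` -/
def S : Set F :=
  {g | ∃ i : ℕ, g = PresentedGroup.of (false, i)} ∪
  {g | ∃ i : ℕ, 1 ≤ i ∧ g = PresentedGroup.of (true, i)}

def K : Subgroup F := Subgroup.closure S

def X (i : ℕ) : F := PresentedGroup.of (false, i)
def Y (i : ℕ) : F := PresentedGroup.of (true, i)

lemma X_mem (i : ℕ) : X i ∈ K := Subgroup.subset_closure (Or.inl ⟨i, rfl⟩)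
lemma Y_mem {i : ℕ} (h : 1 ≤ i) : Y i ∈ K := Subgroup.subset_closure (Or.inr ⟨i, h, rfl⟩)

lemma rel_eq_one {r : FreeGroup (Bool × ℕ)} (hr : r ∈ ftauRels) :
    PresentedGroup.mk ftauRels r = 1 := by
  have : r ∈ Subgroup.normalClosure ftauRels := Subgroup.subset_normalClosure hr
  exact (QuotientGroup.eq_one_iff r).mpr this

lemma relA (a b : Bool) {i j : ℕ} (h : i < j) :
    (PresentedGroup.of (a, j) : F) * PresentedGroup.of (b, i) =
      PresentedGroup.of (b, i) * PresentedGroup.of (a, j + 1) := by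
  have h1 := rel_eq_one (Or.inl ⟨a, b, i, j, h, rfl⟩)
  simp only [map_mul, map_inv] at h1
  have := mul_inv_eq_one.mp h1
  exact this

lemma relB (i : ℕ) : (Y i) * (Y i) = X i * X (i + 1) := by
  have h1 := rel_eq_one (Or.inr ⟨i, rfl⟩)
  simp only [map_mul, map_inv, map_pow] at h1
  have := mul_inv_eq_one.mp h1
  rw [pow_two] at this
  exact this

/-- `x_j y_0 = y_0 x_{j+1}` for `j ≥ 1` -/
lemma relX (j : ℕ) (h : 1 ≤ j) : X j * Y 0 = Y 0 * X (j + 1) := relA false true h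

/-- `y_j y_0 = y_0 y_{j+1}` for `j ≥ 1` -/
lemma relY (j : ℕ) (h : 1 ≤ j) : Y j * Y 0 = Y 0 * Y (j + 1) := relA true true h

lemma conj_back_X (j : ℕ) (h : 1 ≤ j) : (Y 0)⁻¹ * X j * Y 0 = X (j + 1) := by
  rw [mul_assoc, relX j h, ← mul_assoc, inv_mul_cancel, one_mul]

lemma conj_back_Y (j : ℕ) (h : 1 ≤ j) : (Y 0)⁻¹ * Y j * Y 0 = Y (j + 1) := by
  rw [mul_assoc, relY j h, ← mul_assoc, inv_mul_cancel, one_mul]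

lemma conj_fwd_X (j : ℕ) (h : 1 ≤ j) : Y 0 * X (j + 1) * (Y 0)⁻¹ = X j := by
  rw [← relX j h, mul_assoc, mul_inv_cancel, mul_one]

lemma conj_fwd_Y (j : ℕ) (h : 1 ≤ j) : Y 0 * Y (j + 1) * (Y 0)⁻¹ = Y j := by
  rw [← relY j h, mul_assoc, mul_inv_cancel, mul_one]

lemma X1_eq : X 1 = Y 0 * X 2 * (Y 0)⁻¹ := (conj_fwd_X 1 le_rfl).symm
lemma Y1_eq : Y 1 = Y 0 * Y 2 * (Y 0)⁻¹ := (conj_fwd_Y 1 le_rfl).symm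
lemma X0_eq : X 0 = Y 0 * Y 0 * (X 1)⁻¹ := by
  rw [relB 0]; group

/-- Forward conjugation of the generators of `K` lies in `K`. -/
lemma conj_fwd_mem {s : F} (hs : s ∈ S) : Y 0 * s * (Y 0)⁻¹ ∈ K := by
  have hX1 : Y 0 * X 1 * (Y 0)⁻¹ ∈ K := by
    have : Y 0 * X 1 * (Y 0)⁻¹ = (Y 0 * Y 0) * X 2 * (Y 0 * Y 0)⁻¹ := by
      rw [X1_eq]; group
    rw [this, relB 0]
    exact mul_mem (mul_mem (mul_mem (X_mem 0) (X_mem 1)) (X_mem 2))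
      (inv_mem (mul_mem (X_mem 0) (X_mem 1)))
  rcases hs with ⟨i, rfl⟩ | ⟨i, hi, rfl⟩
  · -- s = X i
    match i with
    | 0 =>
      have : Y 0 * X 0 * (Y 0)⁻¹ = (Y 0 * Y 0) * (Y 0 * X 1 * (Y 0)⁻¹)⁻¹ := by
        rw [X0_eq]; group
      show Y 0 * X 0 * (Y 0)⁻¹ ∈ K
      rw [this, relB 0]
      exact mul_mem (mul_mem (X_mem 0) (X_mem 1)) (inv_mem hX1)
    | 1 => exact hX1
    | (j + 2) =>
      show Y 0 * X (j + 2) * (Y 0)⁻¹ ∈ K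
      rw [show j + 2 = (j + 1) + 1 from rfl, conj_fwd_X (j + 1) (Nat.le_add_left 1 j)]
      exact X_mem (j + 1)
  · -- s = Y i, 1 ≤ i
    match i, hi with
    | 1, _ =>
      have : Y 0 * Y 1 * (Y 0)⁻¹ = (Y 0 * Y 0) * Y 2 * (Y 0 * Y 0)⁻¹ := by
        rw [Y1_eq]; group
      show Y 0 * Y 1 * (Y 0)⁻¹ ∈ K
      rw [this, relB 0]
      exact mul_mem (mul_mem (mul_mem (X_mem 0) (X_mem 1)) (Y_mem (by norm_num)))
        (inv_mem (mul_mem (X_mem 0) (X_mem 1)))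
    | (j + 2), _ =>
      show Y 0 * Y (j + 2) * (Y 0)⁻¹ ∈ K
      rw [show j + 2 = (j + 1) + 1 from rfl, conj_fwd_Y (j + 1) (Nat.le_add_left 1 j)]
      exact Y_mem (Nat.le_add_left 1 j)

/-- Backward conjugation of the generators of `K` lies in `K`. -/
lemma conj_back_mem {s : F} (hs : s ∈ S) : (Y 0)⁻¹ * s * Y 0 ∈ K := by
  rcases hs with ⟨i, rfl⟩ | ⟨i, hi, rfl⟩
  · match i with
    | 0 =>
      have hX1inv : (X 1)⁻¹ = Y 0 * (X 2)⁻¹ * (Y 0)⁻¹ := by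
        rw [X1_eq]; group
      have : (Y 0)⁻¹ * X 0 * Y 0 = (Y 0 * Y 0) * (X 2)⁻¹ := by
        rw [X0_eq, hX1inv]; group
      show (Y 0)⁻¹ * X 0 * Y 0 ∈ K
      rw [this, relB 0]
      exact mul_mem (mul_mem (X_mem 0) (X_mem 1)) (inv_mem (X_mem 2))
    | (j + 1) =>
      show (Y 0)⁻¹ * X (j + 1) * Y 0 ∈ K
      rw [conj_back_X (j + 1) (Nat.le_add_left 1 j)]
      exact X_mem (j + 2)
  · show (Y 0)⁻¹ * Y i * Y 0 ∈ K
    rw [conj_back_Y i hi]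
    exact Y_mem (le_trans hi (Nat.le_succ i))

lemma conj_fwd_mem_K {g : F} (hg : g ∈ K) : Y 0 * g * (Y 0)⁻¹ ∈ K := by
  induction hg using Subgroup.closure_induction with
  | mem s hs => exact conj_fwd_mem hs
  | one => simpa using one_mem K
  | mul a b _ _ ha hb =>
      have : Y 0 * (a * b) * (Y 0)⁻¹ = (Y 0 * a * (Y 0)⁻¹) * (Y 0 * b * (Y 0)⁻¹) := by group
      rw [this]; exact mul_mem ha hb
  | inv a _ ha =>
      have : Y 0 * a⁻¹ * (Y 0)⁻¹ = (Y 0 * a * (Y 0)⁻¹)⁻¹ := by group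
      rw [this]; exact inv_mem ha

lemma conj_back_mem_K {g : F} (hg : g ∈ K) : (Y 0)⁻¹ * g * Y 0 ∈ K := by
  induction hg using Subgroup.closure_induction with
  | mem s hs => exact conj_back_mem hs
  | one => simpa using one_mem K
  | mul a b _ _ ha hb =>
      have : (Y 0)⁻¹ * (a * b) * Y 0 = ((Y 0)⁻¹ * a * Y 0) * ((Y 0)⁻¹ * b * Y 0) := by group
      rw [this]; exact mul_mem ha hb
  | inv a _ ha =>
      have : (Y 0)⁻¹ * a⁻¹ * Y 0 = ((Y 0)⁻¹ * a * Y 0)⁻¹ := by group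
      rw [this]; exact inv_mem ha

lemma K_normal : K.Normal := by
  rw [← Subgroup.normalizer_eq_top_iff]
  rw [eq_top_iff]
  intro x _
  refine PresentedGroup.generated_by ftauRels (Subgroup.normalizer (K : Set F)) ?_ x
  rintro ⟨b, i⟩
  rcases b with _ | _
  · exact Subgroup.le_normalizer (X_mem i)
  · match i with
    | 0 =>
      rw [Subgroup.mem_normalizer_iff]
      show ∀ g : F, g ∈ K ↔ Y 0 * g * (Y 0)⁻¹ ∈ K
      intro g
      constructor
      · intro hg; exact conj_fwd_mem_K hg
      · intro hg
        have := conj_back_mem_K hg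
        have heq : (Y 0)⁻¹ * (Y 0 * g * (Y 0)⁻¹) * Y 0 = g := by group
        rwa [heq] at this
    | (j + 1) => exact Subgroup.le_normalizer (Y_mem (Nat.le_add_left 1 j))

/-- the mod-2 invariant: sends `y₀` to the nontrivial element of `ZMod 2`. -/
def fφ : Bool × ℕ → Multiplicative (ZMod 2) :=
  fun p => if p = (true, 0) then Multiplicative.ofAdd 1 else 1

lemma fφ_rels : ∀ r ∈ ftauRels, FreeGroup.lift fφ r = 1 := by
  rintro r (⟨a, b, i, j, hij, rfl⟩ | ⟨i, rfl⟩)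
  · simp only [map_mul, map_inv, FreeGroup.lift_apply_of]
    have h1 : fφ (a, j) = fφ (a, j + 1) := by
      unfold fφ
      have hj : j ≠ 0 := by omega
      simp [Prod.ext_iff, hj]
    rw [mul_inv_eq_one, h1, mul_comm]
  · simp only [map_mul, map_inv, map_pow, FreeGroup.lift_apply_of]
    have h2 : fφ (false, i) = 1 := by simp [fφ]
    have h3 : fφ (false, i + 1) = 1 := by simp [fφ]
    have h4 : fφ (true, i) ^ 2 = 1 := by
      unfold fφ
      split <;> decide
    rw [h2, h3, h4]
    simp

lemma phi_of (p : Bool × ℕ) :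
    PresentedGroup.toGroup fφ_rels (PresentedGroup.of p) = fφ p :=
  PresentedGroup.toGroup.of fφ_rels

end FtauAux

/-- Let `K ≤ F_τ` be the subgroup generated by all `xᵢ` (`i ≥ 0`) and all
`yᵢ` with `i ≥ 1`. Then `K` has index 2 in `F_τ`, with coset decomposition
`F_τ = K ⊔ y₀K`. -/
theorem K_has_index_two :
    let F := PresentedGroup ftauRels
    let K : Subgroup F := Subgroup.closure
      ({g | ∃ i : ℕ, g = PresentedGroup.of (false, i)} ∪
       {g | ∃ i : ℕ, 1 ≤ i ∧ g = PresentedGroup.of (true, i)})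
    K.index = 2 ∧
    (∀ g : F, g ∈ K ∨ ∃ h ∈ K, g = PresentedGroup.of (true, 0) * h) ∧
    PresentedGroup.of (true, 0) ∉ K := by
  intro F K
  have hKK : K = FtauAux.K := rfl
  haveI hN : FtauAux.K.Normal := FtauAux.K_normal
  -- the mod-2 homomorphism
  let φ : F →* Multiplicative (ZMod 2) := PresentedGroup.toGroup FtauAux.fφ_rels
  have hφY0 : φ (PresentedGroup.of (true, 0)) = Multiplicative.ofAdd 1 := by
    rw [show φ (PresentedGroup.of (true, 0)) = FtauAux.fφ (true, 0) from FtauAux.phi_of _]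
    simp [FtauAux.fφ]
  have hKker : FtauAux.K ≤ φ.ker := by
    rw [FtauAux.K, Subgroup.closure_le]
    rintro g (⟨i, rfl⟩ | ⟨i, hi, rfl⟩) <;>
      simp only [SetLike.mem_coe, MonoidHom.mem_ker]
    · rw [show φ (PresentedGroup.of (false, i)) = FtauAux.fφ (false, i) from FtauAux.phi_of _]
      simp [FtauAux.fφ]
    · rw [show φ (PresentedGroup.of (true, i)) = FtauAux.fφ (true, i) from FtauAux.phi_of _]
      simp [FtauAux.fφ, Prod.ext_iff, Nat.one_le_iff_ne_zero.mp hi]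
  have hY0 : PresentedGroup.of (true, 0) ∉ K := by
    rw [hKK]
    intro h
    have := hKker h
    rw [MonoidHom.mem_ker, hφY0] at this
    exact absurd this (by decide)
  -- coverage
  have hY0sq : (FtauAux.Y 0) * (FtauAux.Y 0) ∈ FtauAux.K := by
    rw [FtauAux.relB 0]
    exact mul_mem (FtauAux.X_mem 0) (FtauAux.X_mem 1)
  have hcov : ∀ g : F, g ∈ K ∨ (FtauAux.Y 0)⁻¹ * g ∈ K := by
    intro g
    set π := QuotientGroup.mk' FtauAux.K with hπ
    have hgen : ∀ j : Bool × ℕ, PresentedGroup.of j ∈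
        Subgroup.comap π (Subgroup.zpowers (π (FtauAux.Y 0))) := by
      rintro ⟨b, i⟩
      rcases b with _ | _
      · have : π (FtauAux.X i) = 1 := (QuotientGroup.eq_one_iff _).mpr (FtauAux.X_mem i)
        exact Subgroup.mem_comap.mpr (this ▸ one_mem _)
      · match i with
        | 0 => exact Subgroup.mem_comap.mpr (Subgroup.mem_zpowers _)
        | (j + 1) =>
          have : π (FtauAux.Y (j + 1)) = 1 :=
            (QuotientGroup.eq_one_iff _).mpr (FtauAux.Y_mem (Nat.le_add_left 1 j))
          exact Subgroup.mem_comap.mpr (this ▸ one_mem _)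
    have hg := PresentedGroup.generated_by ftauRels _ hgen g
    rw [Subgroup.mem_comap] at hg
    obtain ⟨n, hn'⟩ := hg
    have hn : π (FtauAux.Y 0) ^ n = π g := hn'
    have hsq : π (FtauAux.Y 0) * π (FtauAux.Y 0) = 1 := by
      rw [← map_mul]
      exact (QuotientGroup.eq_one_iff _).mpr hY0sq
    rcases Int.even_or_odd n with ⟨k, hk⟩ | ⟨k, hk⟩
    · left
      have : π g = 1 := by
        rw [← hn, hk, ← two_mul, zpow_mul]
        have : π (FtauAux.Y 0) ^ (2 : ℤ) = 1 := by
          rw [zpow_two]; exact hsq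
        rw [this, one_zpow]
      rw [hKK]
      exact (QuotientGroup.eq_one_iff _).mp this
    · right
      have hgY : π g = π (FtauAux.Y 0) := by
        rw [← hn, hk, zpow_add, zpow_mul]
        have h2 : π (FtauAux.Y 0) ^ (2 : ℤ) = 1 := by
          rw [zpow_two]; exact hsq
        rw [h2, one_zpow, one_mul, zpow_one]
      have : π ((FtauAux.Y 0)⁻¹ * g) = 1 := by
        rw [map_mul, map_inv, hgY, inv_mul_cancel]
      rw [hKK]
      exact (QuotientGroup.eq_one_iff _).mp this
  refine ⟨?_, ?_, hY0⟩
  · -- index 2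
    rw [Subgroup.index_eq_two_iff]
    refine ⟨FtauAux.Y 0, fun b => ?_⟩
    rcases hcov b with hb | hb
    · refine Or.inr ⟨hb, fun hbY => hY0 ?_⟩
      have : FtauAux.Y 0 = b⁻¹ * (b * FtauAux.Y 0) := by group
      show FtauAux.Y 0 ∈ K
      rw [this]
      exact mul_mem (inv_mem hb) hbY
    · refine Or.inl ⟨?_, fun hbK => hY0 ?_⟩
      · -- b * Y 0 ∈ K
        have hb' : (FtauAux.Y 0)⁻¹ * ((FtauAux.Y 0)⁻¹ * b) * FtauAux.Y 0 ∈ FtauAux.K :=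
          FtauAux.conj_back_mem_K hb
        have heq : b * FtauAux.Y 0 =
            (FtauAux.Y 0 * FtauAux.Y 0) * ((FtauAux.Y 0)⁻¹ * ((FtauAux.Y 0)⁻¹ * b) * FtauAux.Y 0)
            * (FtauAux.Y 0 * FtauAux.Y 0)⁻¹ * (FtauAux.Y 0 * FtauAux.Y 0) := by group
        show b * FtauAux.Y 0 ∈ FtauAux.K
        rw [heq]
        exact mul_mem (mul_mem (mul_mem hY0sq hb') (inv_mem hY0sq)) hY0sq
      · -- b ∈ K → Y 0 ∈ K
        have heq2 : FtauAux.Y 0 = b * ((FtauAux.Y 0)⁻¹ * b)⁻¹ := by group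
        show FtauAux.Y 0 ∈ K
        rw [heq2]
        exact mul_mem hbK (inv_mem hb)
  · intro g
    rcases hcov g with hg | hg
    · exact Or.inl hg
    · refine Or.inr ⟨(FtauAux.Y 0)⁻¹ * g, hg, ?_⟩
      show g = FtauAux.Y 0 * ((FtauAux.Y 0)⁻¹ * g)
      group
end
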